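/- With A, ⋆ and f1, f2, f3, f4 as in the context: an element x ∈ A satisfies x ⋆ x = x if and only if x = Σ_{i ∈ S} fᵢ for some subset S ⊆ {1, 2, 3, 4}. In particular (A, ⋆) has exactly 16 idempotents, and f1, f2, f3, f4 are exactly the minimal (primitive) nonzero idempotents of (A, ⋆), i.e. the nonzero idempotents that cannot be written as a sum of two nonzero ⋆-orthogonal idempotents. -/

import Mathlib

/-- The underlying 4-dimensional complex vector space of the convolution algebra,
with coordinates recording the coefficients of the basis vectors `E`, `P`, `Q`, `I`. -/
abbrev ConvAlg : Type := ℂ × ℂ × ℂ × ℂ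

/-- The basis vector `E` (the cup–cap diagram). -/
def Ev : ConvAlg := (1, 0, 0, 0)

/-- The basis vector `P` (minimal idempotent projecting onto `X₂ ⊠ 1`). -/
def Pv : ConvAlg := (0, 1, 0, 0)

/-- The basis vector `Q` (minimal idempotent projecting onto `1 ⊠ Y₂`). -/
def Qv : ConvAlg := (0, 0, 1, 0)

/-- The basis vector `I` (the identity of `End(X ⊗ X)`). -/
def Iv : ConvAlg := (0, 0, 0, 1)

/-- The convolution (horizontal) product on `End(X ⊗ X)` in the category
`C_{q1,q2}`, written in the basis `E, P, Q, I`: it is the unique `ℂ`-bilinear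
product with `E ⋆ x = x ⋆ E = x`, `I ⋆ I = D·I`, `I ⋆ P = P ⋆ I = (b1/D)·I`,
`I ⋆ Q = Q ⋆ I = (b2/D)·I`, `P ⋆ P = (b1/D²)·E + ((b1−1)/D)·P`,
`Q ⋆ Q = (b2/D²)·E + ((b2−1)/D)·Q`, and
`P ⋆ Q = Q ⋆ P = (1/D)·(I − (1/D)·E − P − Q)`, where `a1 = [2]_{q1}`,
`a2 = [2]_{q2}`, `b1 = [3]_{q1}`, `b2 = [3]_{q2}`, `D = a1·a2`. -/
noncomputable def convMul (q1 q2 : ℂ) (x y : ConvAlg) : ConvAlg :=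
  let b1 : ℂ := q1 ^ 2 + 1 + (q1⁻¹) ^ 2
  let b2 : ℂ := q2 ^ 2 + 1 + (q2⁻¹) ^ 2
  let D : ℂ := (q1 + q1⁻¹) * (q2 + q2⁻¹)
  let xE := x.1; let xP := x.2.1; let xQ := x.2.2.1; let xI := x.2.2.2
  let yE := y.1; let yP := y.2.1; let yQ := y.2.2.1; let yI := y.2.2.2
  ( xE * yE + (b1 / D ^ 2) * (xP * yP) + (b2 / D ^ 2) * (xQ * yQ)
      - (1 / D ^ 2) * (xP * yQ + xQ * yP),
    xE * yP + xP * yE + ((b1 - 1) / D) * (xP * yP) - (1 / D) * (xP * yQ + xQ * yP),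
    xE * yQ + xQ * yE + ((b2 - 1) / D) * (xQ * yQ) - (1 / D) * (xP * yQ + xQ * yP),
    xE * yI + xI * yE + D * (xI * yI) + (b1 / D) * (xP * yI + xI * yP)
      + (b2 / D) * (xQ * yI + xI * yQ) + (1 / D) * (xP * yQ + xQ * yP) )

/-- The four candidate minimal idempotents `f1, f2, f3, f4` of the convolution
algebra, as a function `Fin 4 → ConvAlg`:
`f1 = (1/D)·I`, `f2 = −(1/D)·I + (1/a2²)·E + (a1/a2)·Q`,
`f3 = −(1/D)·I + (1/a1²)·E + (a2/a1)·P`, and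
`f4 = (1/D)·I + (1 − 1/a1² − 1/a2²)·E − (a2/a1)·P − (a1/a2)·Q`. -/
noncomputable def convIdem (q1 q2 : ℂ) : Fin 4 → ConvAlg :=
  let a1 : ℂ := q1 + q1⁻¹
  let a2 : ℂ := q2 + q2⁻¹
  let D : ℂ := a1 * a2
  ![ (1 / D) • Iv,
     (-(1 / D)) • Iv + (1 / a2 ^ 2) • Ev + (a1 / a2) • Qv,
     (-(1 / D)) • Iv + (1 / a1 ^ 2) • Ev + (a2 / a1) • Pv,
     (1 / D) • Iv + (1 - 1 / a1 ^ 2 - 1 / a2 ^ 2) • Ev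
       - (a2 / a1) • Pv - (a1 / a2) • Qv ]

/-!
The characters of the commutative algebra `(A, ⋆)` send `E ↦ 1`, `P ↦ b1/D` or `-1/D`,
`Q ↦ b2/D` or `-1/D`, and `I ↦ D` (for the character with `P ↦ b1/D`, `Q ↦ b2/D`) or `0`.
Using `[3]_q = [2]_q² - 1`, these four characters are multiplicative and form a coordinate
system, so they identify `(A, ⋆)` with `ℂ⁴` under the pointwise product, sending `fᵢ` to the
`i`-th standard idempotent. In `R^ι` for a domain `R` the idempotents are the `0/1`-vectors, i.e.
the sums of standard idempotents over subsets, and the primitive ones are the standard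
idempotents themselves.
-/

open Finset

/-- Primitivity for a bare binary operation, since `convMul` is not the `Mul` instance of
`ConvAlg` (which is the componentwise product). -/
def IsPrimitiveIdem {A : Type*} [Zero A] [Add A] (mul : A → A → A) (x : A) : Prop :=
  mul x x = x ∧ x ≠ 0 ∧
    ¬∃ y z : A, mul y y = y ∧ mul z z = z ∧ y ≠ 0 ∧ z ≠ 0 ∧ mul y z = 0 ∧ mul z y = 0 ∧
      x = y + z

namespace Pi

variable {ι R : Type*} [DecidableEq ι] [CommSemiring R]

lemma orthogonalIdempotents_single_one :
    OrthogonalIdempotents fun i : ι => Pi.single i (1 : R) where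
  idem i := by simp [IsIdempotentElem, ← Pi.single_mul]
  ortho i j hij := by ext k; by_cases hk : k = i <;> simp_all [Pi.single_apply]

lemma sum_single_one_apply (S : Finset ι) (j : ι) :
    (∑ i ∈ S, Pi.single i (1 : R)) j = if j ∈ S then 1 else 0 := by
  simp [Finset.sum_apply, Pi.single_apply]

lemma sum_single_one_injective [Nontrivial R] :
    Function.Injective fun S : Finset ι => ∑ i ∈ S, Pi.single i (1 : R) := by
  intro S T h
  ext j
  have := congrFun h j
  simp only [sum_single_one_apply] at this
  split_ifs at this <;> simp_all

variable [IsDomain R]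

lemma isIdempotentElem_iff_exists_sum_single [Fintype ι] {c : ι → R} :
    IsIdempotentElem c ↔ ∃ S : Finset ι, c = ∑ i ∈ S, Pi.single i 1 := by
  classical
  refine ⟨fun hc => ⟨({j | c j = 1} : Finset ι), funext fun j => ?_⟩, ?_⟩
  · rw [sum_single_one_apply]
    rcases IsIdempotentElem.iff_eq_zero_or_one.1 (congrFun hc j) with h | h <;> simp [h]
  · rintro ⟨S, rfl⟩
    exact orthogonalIdempotents_single_one.isIdempotentElem_sum

lemma ncard_setOf_isIdempotentElem [Fintype ι] :
    {c : ι → R | IsIdempotentElem c}.ncard = 2 ^ Fintype.card ι := by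
  have hrange : {c : ι → R | IsIdempotentElem c} =
      Set.range fun S : Finset ι => ∑ i ∈ S, Pi.single i 1 := by
    ext c
    simp [isIdempotentElem_iff_exists_sum_single, eq_comm]
  rw [hrange, Set.ncard_range_of_injective sum_single_one_injective, Nat.card_eq_fintype_card,
    Fintype.card_finset]

lemma eq_zero_or_eq_zero_of_add_eq_single {y z : ι → R} {i : ι} (hy : IsIdempotentElem y)
    (hz : IsIdempotentElem z) (hyz : y * z = 0) (hsum : y + z = Pi.single i 1) :
    y = 0 ∨ z = 0 := by
  have hy_single : y = Pi.single i (y i) := by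
    rw [← mul_one (y i), Pi.single_mul_right, ← hsum, mul_add, hy.eq, hyz, add_zero]
  have hz_single : z = Pi.single i (z i) := by
    rw [← mul_one (z i), Pi.single_mul_right, ← hsum, mul_add, hz.eq, mul_comm, hyz, zero_add]
  rcases IsIdempotentElem.iff_eq_zero_or_one.1 (congrFun hy i) with h | h
  · left; rw [hy_single, h, Pi.single_zero]
  · right
    have : z i = 0 := by simpa [h] using congrFun hyz i
    rw [hz_single, this, Pi.single_zero]

lemma isPrimitiveIdem_mul_iff [Fintype ι] {c : ι → R} :
    IsPrimitiveIdem (· * ·) c ↔ ∃ i, c = Pi.single i 1 := by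
  have he := orthogonalIdempotents_single_one (ι := ι) (R := R)
  constructor
  · rintro ⟨hc, hc0, hprim⟩
    obtain ⟨S, rfl⟩ := isIdempotentElem_iff_exists_sum_single.1 hc
    obtain ⟨i, hi, -⟩ := exists_ne_zero_of_sum_ne_zero hc0
    refine ⟨i, by_contra fun hne => hprim ?_⟩
    set z := ∑ j ∈ S.erase i, Pi.single j (1 : R)
    have hsplit : ∑ j ∈ S, Pi.single j 1 = Pi.single i 1 + z := (add_sum_erase S _ hi).symm
    have hiz : Pi.single i 1 * z = 0 := he.mul_sum_of_notMem (S.notMem_erase i)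
    refine ⟨_, z, he.idem i, he.isIdempotentElem_sum, by simp, fun hz => hne ?_, hiz,
      (mul_comm _ _).trans hiz, hsplit⟩
    rw [hsplit, hz, add_zero]
  · rintro ⟨i, rfl⟩
    refine ⟨he.idem i, by simp, ?_⟩
    rintro ⟨y, z, hy, hz, hy0, hz0, hyz, -, hsum⟩
    exact (eq_zero_or_eq_zero_of_add_eq_single hy hz hyz hsum.symm).elim hy0 hz0

end Pi

namespace AddEquiv

variable {A B : Type*} [AddZeroClass A] [NonUnitalNonAssocSemiring B] {mul : A → A → A}
  {e : A ≃+ B}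

lemma mul_self_eq_iff_isIdempotentElem (he : ∀ x y, e (mul x y) = e x * e y) (x : A) :
    mul x x = x ↔ IsIdempotentElem (e x) := by
  rw [IsIdempotentElem, ← he, e.injective.eq_iff]

lemma isPrimitiveIdem_iff (he : ∀ x y, e (mul x y) = e x * e y) (x : A) :
    IsPrimitiveIdem mul x ↔ IsPrimitiveIdem (· * ·) (e x) := by
  simp only [IsPrimitiveIdem, e.surjective.exists, ← he, ← map_add, e.injective.eq_iff, ne_eq,
    map_eq_zero_iff e e.injective]

lemma ncard_setOf_mul_self_eq (he : ∀ x y, e (mul x y) = e x * e y) :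
    {x | mul x x = x}.ncard = {c : B | IsIdempotentElem c}.ncard := by
  rw [← Set.ncard_preimage_of_injective_subset_range e.injective (by simp [e.surjective.range_eq])]
  simp [mul_self_eq_iff_isIdempotentElem he]

end AddEquiv

lemma qThree_eq_qTwo_sq_sub_one {q : ℂ} (hq : q ≠ 0) :
    q ^ 2 + 1 + q⁻¹ ^ 2 = (q + q⁻¹) ^ 2 - 1 := by
  field_simp; ring

/-- The four characters of `(A, ⋆)` for `a1 = [2]_q1`, `a2 = [2]_q2`, written with
`b1 = a1² - 1`, `b2 = a2² - 1`. -/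
noncomputable def convChar {a1 a2 : ℂ} (ha1 : a1 ≠ 0) (ha2 : a2 ≠ 0) :
    ConvAlg ≃+ (Fin 4 → ℂ) where
  toFun x := ![x.1 + (a1 ^ 2 - 1) / (a1 * a2) * x.2.1 + (a2 ^ 2 - 1) / (a1 * a2) * x.2.2.1
      + a1 * a2 * x.2.2.2,
    x.1 - x.2.1 / (a1 * a2) + (a2 ^ 2 - 1) / (a1 * a2) * x.2.2.1,
    x.1 + (a1 ^ 2 - 1) / (a1 * a2) * x.2.1 - x.2.2.1 / (a1 * a2),
    x.1 - x.2.1 / (a1 * a2) - x.2.2.1 / (a1 * a2)]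
  invFun c := (c 1 / a2 ^ 2 + c 2 / a1 ^ 2 + c 3 * (1 - 1 / a1 ^ 2 - 1 / a2 ^ 2),
    (c 2 - c 3) * a2 / a1, (c 1 - c 3) * a1 / a2, (c 0 - c 1 - c 2 + c 3) / (a1 * a2))
  left_inv x := by
    obtain ⟨xE, xP, xQ, xI⟩ := x
    simp only [Prod.mk.injEq]
    refine ⟨?_, ?_, ?_, ?_⟩ <;> simp <;> field_simp <;> ring
  right_inv c := by
    funext j
    fin_cases j <;> simp <;> field_simp <;> ring
  map_add' x y := by
    funext j
    fin_cases j <;> simp <;> ring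

lemma convChar_convMul {q1 q2 : ℂ} (h1 : q1 ≠ 0) (h2 : q2 ≠ 0) (ha1 : q1 + q1⁻¹ ≠ 0)
    (ha2 : q2 + q2⁻¹ ≠ 0) (x y : ConvAlg) :
    convChar ha1 ha2 (convMul q1 q2 x y) = convChar ha1 ha2 x * convChar ha1 ha2 y := by
  simp only [convMul, qThree_eq_qTwo_sq_sub_one h1, qThree_eq_qTwo_sq_sub_one h2]
  generalize q1 + q1⁻¹ = a1 at ha1 ⊢
  generalize q2 + q2⁻¹ = a2 at ha2 ⊢
  obtain ⟨xE, xP, xQ, xI⟩ := x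
  obtain ⟨yE, yP, yQ, yI⟩ := y
  funext j
  fin_cases j <;> simp [convChar] <;> field_simp <;> ring

lemma convChar_convIdem {q1 q2 : ℂ} (ha1 : q1 + q1⁻¹ ≠ 0) (ha2 : q2 + q2⁻¹ ≠ 0) (i : Fin 4) :
    convChar ha1 ha2 (convIdem q1 q2 i) = Pi.single i 1 := by
  simp only [convIdem]
  generalize q1 + q1⁻¹ = a1 at ha1 ⊢
  generalize q2 + q2⁻¹ = a2 at ha2 ⊢
  funext j
  fin_cases i <;> fin_cases j <;> simp [convChar, Ev, Pv, Qv, Iv] <;> field_simp <;> ring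

/-- An element `x` satisfies `x ⋆ x = x` iff `x` is the sum of the `fᵢ` over some
subset `S ⊆ {1,2,3,4}`; in particular `(A, ⋆)` has exactly `16` idempotents, and
`f1, f2, f3, f4` are exactly the minimal (primitive) nonzero idempotents, i.e. the
nonzero idempotents that are not a sum of two nonzero `⋆`-orthogonal idempotents. -/
theorem convAlg_idempotents_classification (q1 q2 : ℂ) (h1 : q1 ≠ 0) (h2 : q2 ≠ 0)
    (ha1 : q1 + q1⁻¹ ≠ 0) (ha2 : q2 + q2⁻¹ ≠ 0) :
    (∀ x : ConvAlg, convMul q1 q2 x x = x ↔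
      ∃ S : Finset (Fin 4), x = ∑ i ∈ S, convIdem q1 q2 i) ∧
    {x : ConvAlg | convMul q1 q2 x x = x}.ncard = 16 ∧
    (∀ x : ConvAlg,
      (convMul q1 q2 x x = x ∧ x ≠ 0 ∧
        ¬∃ y z : ConvAlg, convMul q1 q2 y y = y ∧ convMul q1 q2 z z = z ∧
          y ≠ 0 ∧ z ≠ 0 ∧ convMul q1 q2 y z = 0 ∧ convMul q1 q2 z y = 0 ∧
          x = y + z) ↔
      ∃ i : Fin 4, x = convIdem q1 q2 i) := by
  set e := convChar ha1 ha2
  have he : ∀ x y, e (convMul q1 q2 x y) = e x * e y := convChar_convMul h1 h2 ha1 ha2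
  have hf : ∀ i, e (convIdem q1 q2 i) = Pi.single i 1 := convChar_convIdem ha1 ha2
  have hsum (S : Finset (Fin 4)) : e (∑ i ∈ S, convIdem q1 q2 i) = ∑ i ∈ S, Pi.single i 1 := by
    simp only [map_sum, hf]
  refine ⟨fun x => ?_, ?_, fun x => ?_⟩
  · simp_rw [e.mul_self_eq_iff_isIdempotentElem he x, Pi.isIdempotentElem_iff_exists_sum_single,
      ← hsum, e.injective.eq_iff]
  · rw [e.ncard_setOf_mul_self_eq he, Pi.ncard_setOf_isIdempotentElem, Fintype.card_fin]
    rfl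
  · refine (e.isPrimitiveIdem_iff he x).trans ?_
    simp_rw [Pi.isPrimitiveIdem_mul_iff, ← hf, e.injective.eq_iff]
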